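/- arXiv:2009.03570 — 2 statements merged into one kernel-verified Lean document; each statement's English description precedes it below -/
import Mathlib

section
/- Fix an integer d ≥ 1 and a real number m with 0 < m < 2. Then f_m(k) > 0 for every k ∈ ℝ^d, so F(k) := ( (Σ_{j=1}^d (cos(2π k_j) − 1) + m)/f_m(k), sin(2π k_1)/f_m(k), …, sin(2π k_d)/f_m(k) ) is a well-defined point of the unit sphere S^d ⊂ ℝ^{d+1}; moreover F(k) = (1, 0, …, 0) if and only if k ∈ ℤ^d. -/
noncomputable section

/-- A Clifford system `(c_1, …, c_d, γ)` on a complex Hilbert space `H`: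
`c_j* = -c_j`, `c_j c_l + c_l c_j = -2 δ_{jl} 1`, `γ* = γ`, `γ² = 1`, `γ c_j = -c_j γ`. -/
structure CliffordSystem (H : Type*) [NormedAddCommGroup H] [InnerProductSpace ℂ H]
    [CompleteSpace H] (d : ℕ) where
  c : Fin d → H →L[ℂ] H
  γ : H →L[ℂ] H
  c_skew : ∀ j, star (c j) = -c j
  c_rel : ∀ j l, c j * c l + c l * c j =
    if j = l then (-2 : ℂ) • (1 : H →L[ℂ] H) else 0
  γ_sa : star γ = γ
  γ_sq : γ * γ = 1
  γ_anticomm : ∀ j, γ * c j = -(c j * γ)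

variable {H : Type*} [NormedAddCommGroup H] [InnerProductSpace ℂ H] [CompleteSpace H]

/-- `x = (U - U*)/(2i)`, the "imaginary part" of a unitary `U`. -/
def xPart (U : H →L[ℂ] H) : H →L[ℂ] H := ((2 * Complex.I)⁻¹ : ℂ) • (U - star U)

/-- `y = (U + U*)/2`, the "real part" of a unitary `U`. -/
def yPart (U : H →L[ℂ] H) : H →L[ℂ] H := ((2 : ℂ)⁻¹ : ℂ) • (U + star U)

/-- The massive hermitian Wilson--Dirac operator
`D(κ, m) = κ·Σ_j i x_j c_j + γ·(κ·Σ_j (y_j − 1) + m)`. -/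
def wilsonDirac {d : ℕ} (cs : CliffordSystem H d) (U : Fin d → H →L[ℂ] H)
    (κ m : ℝ) : H →L[ℂ] H :=
  (κ : ℂ) • (∑ j, Complex.I • (xPart (U j) * cs.c j)) +
    cs.γ * ((κ : ℂ) • (∑ j, (yPart (U j) - 1)) + (m : ℂ) • (1 : H →L[ℂ] H))

/-- `f_m(k)² = Σ_j sin²(2π k_j) + (Σ_j (cos(2π k_j) − 1) + m)²`. -/
def fmSq (d : ℕ) (m : ℝ) (k : Fin d → ℝ) : ℝ :=
  ∑ j, Real.sin (2 * Real.pi * k j) ^ 2 +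
    (∑ j, (Real.cos (2 * Real.pi * k j) - 1) + m) ^ 2

/-- `E_{>0}(A)`: the sum of the eigenspaces of `A` with positive (real) eigenvalue. -/
def posSpace (A : H →L[ℂ] H) : Submodule ℂ H :=
  ⨆ (μ : ℝ) (_ : 0 < μ), Module.End.eigenspace (A.toLinearMap) (μ : ℂ)

/-- `E_{<0}(A)`: the sum of the eigenspaces of `A` with negative (real) eigenvalue. -/
def negSpace (A : H →L[ℂ] H) : Submodule ℂ H :=
  ⨆ (μ : ℝ) (_ : μ < 0), Module.End.eigenspace (A.toLinearMap) (μ : ℂ)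

/-- `𝐈(A) = (dim E_{>0}(A) − dim E_{<0}(A))/2`, a priori a half-integer. -/
def Ind (A : H →L[ℂ] H) : ℚ :=
  ((Module.finrank ℂ (posSpace A) : ℚ) - (Module.finrank ℂ (negSpace A) : ℚ)) / 2

end

/-- The map `F : ℝ^d → ℝ^{d+1}` from the proof of Proposition 3.7. -/
noncomputable def Fmap (d : ℕ) (m : ℝ) (k : Fin d → ℝ) : Fin (d + 1) → ℝ :=
  Fin.cons ((∑ j, (Real.cos (2 * Real.pi * k j) - 1) + m) / Real.sqrt (fmSq d m k))
    fun j => Real.sin (2 * Real.pi * k j) / Real.sqrt (fmSq d m k)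


/-! If `f_m(k) = 0`, all sines vanish, so every `cos (2π k_j)` is `±1`. A single `-1` already
pushes `Σ_j (cos (2π k_j) - 1) + m` below `m - 2 < 0`, so that term can only vanish, or equal
`f_m(k) ≥ 0` at the north pole, when all cosines are `1`; this forces `m = 0` in the first case and
`k ∈ ℤ^d` in the second. -/

open Real Finset

section Cosines

variable {ι : Type*} [Fintype ι] {θ : ι → ℝ} {m : ℝ}

lemma sum_cos_sub_one_add_lt_zero_of_cos_eq_neg_one (hm : m < 2) {j : ι} (hj : cos (θ j) = -1) :
    ∑ i, (cos (θ i) - 1) + m < 0 := by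
  classical
  have hle : ∑ i, (cos (θ i) - 1) ≤ cos (θ j) - 1 :=
    calc ∑ i, (cos (θ i) - 1)
        = (cos (θ j) - 1) + ∑ i ∈ univ.erase j, (cos (θ i) - 1) :=
          (add_sum_erase _ _ (mem_univ j)).symm
      _ ≤ cos (θ j) - 1 :=
          add_le_of_nonpos_right (sum_nonpos fun i _ => by linarith [cos_le_one (θ i)])
  linarith

lemma cos_eq_one_of_sin_eq_zero_of_sum_nonneg (hm : m < 2) (hsin : ∀ j, sin (θ j) = 0)
    (hnonneg : 0 ≤ ∑ i, (cos (θ i) - 1) + m) (j : ι) : cos (θ j) = 1 :=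
  (sin_eq_zero_iff_cos_eq.mp (hsin j)).resolve_right fun h =>
    (sum_cos_sub_one_add_lt_zero_of_cos_eq_neg_one hm h).not_ge hnonneg

end Cosines

lemma cos_two_pi_mul_eq_one_iff (x : ℝ) : cos (2 * π * x) = 1 ↔ ∃ n : ℤ, x = n := by
  rw [cos_eq_one_iff]
  refine exists_congr fun n => ?_
  rw [mul_comm, mul_right_inj' two_pi_pos.ne', eq_comm]

lemma fmSq_pos {d : ℕ} {m : ℝ} (hm0 : 0 < m) (hm2 : m < 2) (k : Fin d → ℝ) :
    0 < fmSq d m k := by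
  by_contra! hle
  have hzero : fmSq d m k = 0 := le_antisymm hle (by unfold fmSq; positivity)
  rw [fmSq, add_eq_zero_iff_of_nonneg (by positivity) (sq_nonneg _),
    sum_eq_zero_iff_of_nonneg fun _ _ => sq_nonneg _] at hzero
  obtain ⟨hsin, hsum⟩ := hzero
  simp only [mem_univ, true_implies, pow_eq_zero_iff two_ne_zero] at hsin hsum
  have hcos := cos_eq_one_of_sin_eq_zero_of_sum_nonneg hm2 hsin hsum.ge
  simp only [hcos, sub_self, sum_const_zero, zero_add] at hsum
  exact hm0.ne' hsum

lemma sum_Fmap_sq {d : ℕ} {m : ℝ} {k : Fin d → ℝ} (hpos : 0 < fmSq d m k) :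
    ∑ i, Fmap d m k i ^ 2 = 1 := by
  rw [Fin.sum_univ_succ]
  simp only [Fmap, Fin.cons_zero, Fin.cons_succ, div_pow]
  rw [← sum_div, sq_sqrt hpos.le, ← add_div, div_eq_one_iff_eq hpos.ne', fmSq]
  ring

lemma Fmap_eq_cons_one_zero_iff {d : ℕ} {m : ℝ} (hm0 : 0 < m) (hm2 : m < 2) (k : Fin d → ℝ) :
    (Fmap d m k = Fin.cons 1 fun _ => 0) ↔ ∀ j, cos (2 * π * k j) = 1 := by
  have hsqrt : 0 < √(fmSq d m k) := sqrt_pos.mpr (fmSq_pos hm0 hm2 k)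
  rw [Fmap, Fin.cons_inj, funext_iff]
  simp only [div_eq_zero_iff, hsqrt.ne', or_false, div_eq_one_iff_eq hsqrt.ne']
  constructor
  · rintro ⟨hsum, hsin⟩
    exact cos_eq_one_of_sin_eq_zero_of_sum_nonneg hm2 hsin (hsum ▸ sqrt_nonneg _)
  · intro hcos
    have hsin : ∀ j, sin (2 * π * k j) = 0 := fun j => sin_eq_zero_iff_cos_eq.mpr (Or.inl (hcos j))
    have hsum : ∑ j, (cos (2 * π * k j) - 1) + m = m := by simp [hcos]
    refine ⟨?_, hsin⟩
    rw [fmSq, hsum]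
    simp [hsin, sqrt_sq hm0.le]

theorem statement4_general (d : ℕ) (m : ℝ) (hm0 : 0 < m) (hm2 : m < 2)
    (k : Fin d → ℝ) :
    0 < Real.sqrt (fmSq d m k) ∧
    (∑ i, Fmap d m k i ^ 2 = 1) ∧
    ((Fmap d m k = Fin.cons 1 fun _ => 0) ↔ ∀ j, ∃ n : ℤ, k j = (n : ℝ)) := by
  have hpos := fmSq_pos hm0 hm2 k
  exact ⟨sqrt_pos.mpr hpos, sum_Fmap_sq hpos,
    (Fmap_eq_cons_one_zero_iff hm0 hm2 k).trans
      (forall_congr' fun j => cos_two_pi_mul_eq_one_iff (k j))⟩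

/-- `F` is a well-defined map to the sphere `S^d`, hitting the north pole
exactly on the integer lattice. -/
theorem statement4 (d : ℕ) (hd : 1 ≤ d) (m : ℝ) (hm0 : 0 < m) (hm2 : m < 2)
    (k : Fin d → ℝ) :
    0 < Real.sqrt (fmSq d m k) ∧
    (∑ i, Fmap d m k i ^ 2 = 1) ∧
    ((Fmap d m k = Fin.cons 1 fun _ => 0) ↔ ∀ j, ∃ n : ℤ, k j = (n : ℝ)) :=
  statement4_general d m hm0 hm2 k
end

section
/- Fix an integer d ≥ 1, a real number m with 0 < m < 2, a finite-dimensional complex Hilbert space H, a Clifford system (c_1, …, c_d, γ) on H, and unitaries U_1, …, U_d on H that pairwise commute and each commute with every c_j and with γ. Then the operator D(1, m) is invertible and 𝐈(D(1, m)) = 0. -/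
/-!
Write `D := D(1, m) = A + γ B` with `A = Σ_j i x_j c_j` and `B = Σ_j (y_j - 1) + m`. Since the
`U_j` commute, all `x_j, y_j` commute with each other and with the Clifford system, so `A`
commutes with `B`, `γ` anticommutes with `A` and commutes with `B`, and the Clifford relations give
`D² = Σ_j x_j² + B²`. Hence `D v = 0` forces `x_j v = 0` and `B v = 0`. On the joint kernel of the
`x_j` the commuting self-adjoint `y_j` satisfy `y_j² = 1`, so at a joint eigenvector every `y_j` is
`±1` and `B` is `m - 2k ≠ 0`, because `0 < m < 2`.

For the index, `dim E_{>0}(D) - dim E_{<0}(D) = tr (D |D|⁻¹)` and `|D|⁻¹ = p(D²)` for an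
interpolating polynomial `p`. Both `γ` and `c_1` commute with `D²`, while `γ` anticommutes with `A`
and `c_1` anticommutes with `γ B`; conjugating by them shows `tr (A p(D²)) = tr (γ B p(D²)) = 0`.
-/

open Polynomial Module Module.End

theorem LinearMap.trace_mul_eq_zero_of_anticommute {K V : Type*} [Field K] [CharZero K]
    [AddCommGroup V] [Module K V] {R A N : End K V} (hR : IsUnit R)
    (hRA : R * A = -(A * R)) (hRN : Commute R N) : LinearMap.trace K V (A * N) = 0 := by
  obtain ⟨u, rfl⟩ := hR
  have hconj : ↑u⁻¹ * (A * N) * ↑u = -(A * N) := by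
    rw [mul_assoc, mul_assoc, ← hRN.eq, ← mul_assoc A, ← neg_eq_iff_eq_neg.mpr hRA, neg_mul,
      mul_neg, ← mul_assoc, ← mul_assoc, Units.inv_mul, one_mul]
  rw [← self_eq_neg, ← map_neg, ← hconj, LinearMap.trace_mul_comm K _ (u : End K V),
    ← mul_assoc, Units.mul_inv, one_mul]

theorem Polynomial.exists_eval_eq {F : Type*} [Field F] (s : Finset F) (f : F → F) :
    ∃ p : F[X], ∀ x ∈ s, p.eval x = f x := by
  classical
  exact ⟨Lagrange.interpolate s id f, fun x hx ↦
    Lagrange.eval_interpolate_at_node f (Set.injOn_id _) hx⟩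

namespace LinearMap.IsSymmetric

section Signature

variable {E : Type*} [NormedAddCommGroup E] [InnerProductSpace ℂ E] [FiniteDimensional ℂ E]
  {T : E →ₗ[ℂ] E} {n : ℕ}

theorem iSup_eigenspace_eq_span (hT : T.IsSymmetric) (hn : finrank ℂ E = n) (P : ℝ → Prop) :
    ⨆ (μ : ℝ) (_ : P μ), eigenspace T (μ : ℂ) =
      Submodule.span ℂ (Set.range fun i : {i // P (hT.eigenvalues hn i)} ↦
        hT.eigenvectorBasis hn i) := by
  set b := hT.eigenvectorBasis hn
  apply le_antisymm
  · refine iSup₂_le fun ν hν v hv ↦ ?_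
    rw [← b.sum_repr v]
    refine Submodule.sum_mem _ fun i _ ↦ ?_
    by_cases hi : P (hT.eigenvalues hn i)
    · exact Submodule.smul_mem _ _ (Submodule.subset_span ⟨⟨i, hi⟩, rfl⟩)
    · suffices b.repr v i = 0 by simp [this]
      by_contra hv0
      have hrepr := hT.eigenvectorBasis_apply_self_apply hn v i
      rw [mem_eigenspace_iff.mp hv, map_smul, PiLp.smul_apply, smul_eq_mul] at hrepr
      obtain rfl : ν = hT.eigenvalues hn i :=
        Complex.ofReal_injective (by simpa using mul_right_cancel₀ hv0 hrepr)
      exact hi hν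
  · rw [Submodule.span_le]
    rintro _ ⟨i, rfl⟩
    exact le_iSup₂ (f := fun (μ : ℝ) (_ : P μ) ↦ eigenspace T (μ : ℂ)) _ i.2
      (hT.hasEigenvector_eigenvectorBasis hn i).1

theorem finrank_iSup_eigenspace (hT : T.IsSymmetric) (hn : finrank ℂ E = n) (P : ℝ → Prop)
    [DecidablePred P] :
    finrank ℂ (⨆ (μ : ℝ) (_ : P μ), eigenspace T (μ : ℂ) : Submodule ℂ E) =
      (Finset.univ.filter fun i ↦ P (hT.eigenvalues hn i)).card := by
  rw [iSup_eigenspace_eq_span hT hn, finrank_span_eq_card, Fintype.card_subtype]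
  exact (hT.eigenvectorBasis hn).orthonormal.linearIndependent.comp _ Subtype.val_injective

theorem trace_mul_aeval_mul_self (hT : T.IsSymmetric) (hn : finrank ℂ E = n) (p : ℂ[X]) :
    LinearMap.trace ℂ E (T * aeval (T * T) p) =
      ∑ i, (hT.eigenvalues hn i : ℂ) * p.eval (hT.eigenvalues hn i * hT.eigenvalues hn i : ℂ) := by
  have hcomp : aeval (T * T) p = aeval T (p.comp (X * X)) := by simp [aeval_comp]
  rw [trace_eq_sum_inner _ (hT.eigenvectorBasis hn), hcomp]
  refine Finset.sum_congr rfl fun i _ ↦ ?_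
  rw [Module.End.mul_apply, aeval_apply_of_hasEigenvector (hT.hasEigenvector_eigenvectorBasis hn i),
    map_smul, hT.apply_eigenvectorBasis, inner_smul_right, inner_smul_right,
    OrthonormalBasis.inner_eq_one]
  simp [mul_comm]

theorem finrank_iSup_eigenspace_pos_eq_neg (hT : T.IsSymmetric)
    (htr : ∀ p : ℂ[X], LinearMap.trace ℂ E (T * aeval (T * T) p) = 0) :
    finrank ℂ (⨆ (μ : ℝ) (_ : 0 < μ), eigenspace T (μ : ℂ) : Submodule ℂ E) =
      finrank ℂ (⨆ (μ : ℝ) (_ : μ < 0), eigenspace T (μ : ℂ) : Submodule ℂ E) := by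
  classical
  set μ := hT.eigenvalues rfl
  -- `μ p(μ²) = μ |μ|⁻¹` is the sign of `μ`, also at `μ = 0` since `0⁻¹ = 0`.
  obtain ⟨p, hp⟩ := Polynomial.exists_eval_eq (Finset.univ.image fun i ↦ (μ i * μ i : ℂ))
    fun z ↦ ((√z.re)⁻¹ : ℝ)
  have hsign : ∀ i, (μ i : ℂ) * p.eval (μ i * μ i : ℂ) =
      ((if 0 < μ i then 1 else 0) - (if μ i < 0 then 1 else 0) : ℝ) := by
    intro i
    rw [hp _ (Finset.mem_image_of_mem _ (Finset.mem_univ i))]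
    norm_cast
    rw [Real.sqrt_mul_self_eq_abs]
    rcases lt_trichotomy (μ i) 0 with h | h | h
    · simp [h, lt_asymm h, abs_of_neg h, h.ne]
    · simp [h]
    · simp [h, lt_asymm h, abs_of_pos h, h.ne']
  have htrace := htr p
  rw [trace_mul_aeval_mul_self hT rfl, Finset.sum_congr rfl fun i _ ↦ hsign i,
    ← Complex.ofReal_sum, Complex.ofReal_eq_zero, Finset.sum_sub_distrib, Finset.sum_boole,
    Finset.sum_boole, sub_eq_zero] at htrace
  rw [finrank_iSup_eigenspace hT rfl, finrank_iSup_eigenspace hT rfl]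
  exact_mod_cast htrace

end Signature

theorem exists_mem_ne_zero_forall_apply_eq_smul {𝕜 E ι : Type*}
    [RCLike 𝕜] [NormedAddCommGroup E] [InnerProductSpace 𝕜 E] [FiniteDimensional 𝕜 E]
    {T : ι → E →ₗ[𝕜] E} (hT : ∀ i, (T i).IsSymmetric) (hC : Pairwise fun i j ↦ Commute (T i) (T j))
    {p : Submodule 𝕜 E} (hp : p ≠ ⊥) (hpT : ∀ i, ∀ v ∈ p, T i v ∈ p) :
    ∃ v ∈ p, v ≠ 0 ∧ ∃ χ : ι → 𝕜, ∀ i, T i v = χ i • v := by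
  have htop := iSup_iInf_eq_top_of_commute
    (T := fun i ↦ (T i).restrict (hpT i)) (fun i ↦ (hT i).restrict_invariant (hpT i))
    fun i j hij ↦ LinearMap.restrict_commute (hC hij) _ _
  have : Nontrivial p := Submodule.nontrivial_iff_ne_bot.mpr hp
  obtain ⟨χ, hχ⟩ : ∃ χ : ι → 𝕜, ⨅ i, eigenspace ((T i).restrict (hpT i)) (χ i) ≠ ⊥ := by
    by_contra! h
    exact bot_ne_top ((iSup_eq_bot.mpr h).symm.trans htop)
  obtain ⟨w, hw, hw0⟩ := Submodule.exists_mem_ne_zero_of_ne_bot hχ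
  refine ⟨w, w.2, by simpa using hw0, χ, fun i ↦ ?_⟩
  exact congrArg Subtype.val (mem_eigenspace_iff.mp ((Submodule.mem_iInf _).mp hw i))

end LinearMap.IsSymmetric

theorem Ind_eq_zero_of_trace_mul_aeval_eq_zero {H : Type*} [NormedAddCommGroup H]
    [InnerProductSpace ℂ H] [FiniteDimensional ℂ H] {D : H →L[ℂ] H} (hD : IsSelfAdjoint D)
    (htr : ∀ p : ℂ[X], LinearMap.trace ℂ H ((D : H →ₗ[ℂ] H) * aeval ((D : H →ₗ[ℂ] H) * D) p) = 0) :
    Ind D = 0 := by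
  rw [Ind, posSpace, negSpace, hD.isSymmetric.finrank_iSup_eigenspace_pos_eq_neg htr, sub_self,
    zero_div]

theorem ContinuousLinearMap.apply_eq_zero_of_sum_mul_self_apply_eq_zero {𝕜 E ι : Type*}
    [RCLike 𝕜] [NormedAddCommGroup E] [InnerProductSpace 𝕜 E] [CompleteSpace E] [Fintype ι]
    {S : ι → E →L[𝕜] E} (hS : ∀ i, IsSelfAdjoint (S i)) {v : E}
    (hv : (∑ i, S i * S i) v = 0) (i : ι) : S i v = 0 := by
  have hnorm : ∀ i, ‖S i v‖ ^ 2 = RCLike.re (inner 𝕜 ((S i * S i) v) v) := fun i ↦ by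
    rw [apply_norm_sq_eq_inner_adjoint_left, ← star_eq_adjoint, (hS i).star_eq]
    rfl
  have hsum : ∑ i, ‖S i v‖ ^ 2 = 0 := by
    simp_rw [hnorm, ← map_sum, ← sum_inner, ← sum_apply, hv, inner_zero_left, map_zero]
  simpa using (Finset.sum_eq_zero_iff_of_nonneg fun i _ ↦ sq_nonneg _).mp hsum i (Finset.mem_univ _)

theorem add_mul_mul_self_eq_of_anticommute {R : Type*} [Ring R] {a b g : R} (hg : g * g = 1)
    (hga : g * a = -(a * g)) (hgb : Commute g b) (hab : Commute a b) :
    (a + g * b) * (a + g * b) = a * a + b * b := by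
  have hcross : a * (g * b) + g * b * a = 0 := by
    rw [← mul_assoc, ← neg_eq_iff_eq_neg.mpr hga, neg_mul, mul_assoc, hab.eq, mul_assoc,
      neg_add_cancel]
  have hsq : g * b * (g * b) = b * b := by
    rw [mul_assoc, ← mul_assoc b, ← hgb.eq, ← mul_assoc, ← mul_assoc, hg, one_mul]
  rw [add_mul, mul_add, mul_add, hsq, add_assoc, ← add_assoc (a * (g * b)), hcross, zero_add]

theorem sum_sub_one_add_ne_zero {ι : Type*} [Fintype ι] {μ : ι → ℂ} (hμ : ∀ i, μ i * μ i = 1)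
    {m : ℝ} (hm0 : 0 < m) (hm2 : m < 2) : ∑ i, (μ i - 1) + m ≠ 0 := by
  classical
  have hterm : ∀ i, μ i - 1 = if μ i = -1 then -2 else 0 := fun i ↦ by
    rcases mul_self_eq_one_iff.mp (hμ i) with h | h <;> norm_num [h]
  rw [Finset.sum_congr rfl fun i _ ↦ hterm i, Finset.sum_ite, Finset.sum_const_zero, add_zero,
    Finset.sum_const, nsmul_eq_mul]
  intro h
  set k := (Finset.univ.filter fun i ↦ μ i = -1).card
  have hmk : m = 2 * k := by exact_mod_cast (by linear_combination h : (m : ℂ) = 2 * k)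
  rcases Nat.eq_zero_or_pos k with hk | hk
  · simp [hk] at hmk
    linarith
  · have : (1 : ℝ) ≤ k := by exact_mod_cast hk
    linarith

theorem Commute.star_left_of_mem_unitary {R : Type*} [Monoid R] [StarMul R] {U K : R}
    (hU : U ∈ unitary R) (h : Commute U K) : Commute (star U) K :=
  Commute.units_inv_left (u := Unitary.toUnits ⟨U, hU⟩) h

section

variable {H : Type*} [NormedAddCommGroup H] [InnerProductSpace ℂ H] [CompleteSpace H] {d : ℕ}

theorem isSelfAdjoint_xPart (U : H →L[ℂ] H) : IsSelfAdjoint (xPart U) := by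
  have hconj : star ((2 * Complex.I)⁻¹ : ℂ) = -(2 * Complex.I)⁻¹ := by simp
  rw [IsSelfAdjoint, xPart, star_smul, star_sub, star_star, hconj]
  module

theorem isSelfAdjoint_yPart (U : H →L[ℂ] H) : IsSelfAdjoint (yPart U) := by
  rw [IsSelfAdjoint, yPart, star_smul, star_add, star_star, add_comm]
  simp

theorem xPart_mul_self_add_yPart_mul_self {U : H →L[ℂ] H} (hU : U ∈ unitary (H →L[ℂ] H)) :
    xPart U * xPart U + yPart U * yPart U = 1 := by
  have hI : (2 * Complex.I)⁻¹ * (2 * Complex.I)⁻¹ = -(2⁻¹ * 2⁻¹ : ℂ) := by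
    rw [← mul_inv, mul_mul_mul_comm, Complex.I_mul_I]
    ring
  simp only [xPart, yPart, smul_mul_smul_comm, hI, sub_mul, mul_sub, add_mul, mul_add,
    Unitary.star_mul_self_of_mem hU, Unitary.mul_star_self_of_mem hU]
  module

theorem Commute.xPart_left {U K : H →L[ℂ] H} (hU : U ∈ unitary (H →L[ℂ] H))
    (h : Commute U K) : Commute (xPart U) K :=
  (h.sub_left (h.star_left_of_mem_unitary hU)).smul_left _

theorem Commute.yPart_left {U K : H →L[ℂ] H} (hU : U ∈ unitary (H →L[ℂ] H))
    (h : Commute U K) : Commute (yPart U) K :=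
  (h.add_left (h.star_left_of_mem_unitary hU)).smul_left _

noncomputable def wilsonMass (U : Fin d → H →L[ℂ] H) (m : ℝ) : H →L[ℂ] H :=
  ∑ j, (yPart (U j) - 1) + (m : ℂ) • 1

theorem isSelfAdjoint_wilsonMass (U : Fin d → H →L[ℂ] H) (m : ℝ) :
    IsSelfAdjoint (wilsonMass U m) :=
  (isSelfAdjoint_sum _ fun _ _ ↦ (isSelfAdjoint_yPart _).sub (.one _)).add
    (IsSelfAdjoint.smul (Complex.conj_ofReal m) (.one _))

theorem wilsonMass_apply_ne_zero {U : Fin d → H →L[ℂ] H} {m : ℝ}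
    (hU : ∀ j, U j ∈ unitary (H →L[ℂ] H)) (hm0 : 0 < m) (hm2 : m < 2) {w : H} (hw0 : w ≠ 0)
    (hx : ∀ j, xPart (U j) w = 0) {μ : Fin d → ℂ} (hy : ∀ j, yPart (U j) w = μ j • w) :
    wilsonMass U m w ≠ 0 := by
  have hμ : ∀ j, μ j * μ j = 1 := fun j ↦ by
    have h := congr($(xPart_mul_self_add_yPart_mul_self (hU j)) w)
    rw [add_apply, mul_apply_eq_comp, mul_apply_eq_comp, hx, map_zero, zero_add,
      one_apply_eq_self, hy, map_smul, hy, smul_smul] at h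
    exact smul_left_injective ℂ hw0 (h.trans (one_smul ℂ w).symm)
  have hB : wilsonMass U m w = (∑ j, (μ j - 1) + m) • w := by
    simp [wilsonMass, hy, add_smul, Finset.sum_smul, sub_smul, Nat.cast_smul_eq_nsmul]
  rw [hB, smul_ne_zero_iff]
  exact ⟨sum_sub_one_add_ne_zero hμ hm0 hm2, hw0⟩

end

namespace CliffordSystem

variable {H : Type*} [NormedAddCommGroup H] [InnerProductSpace ℂ H] [CompleteSpace H] {d : ℕ}

section

variable (cs : CliffordSystem H d)

theorem c_mul_self (j : Fin d) : cs.c j * cs.c j = -1 := by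
  have h := cs.c_rel j j
  rw [if_pos rfl, ← two_smul ℂ] at h
  exact smul_right_injective _ two_ne_zero (h.trans (by module))

theorem isUnit_c (j : Fin d) : IsUnit (cs.c j) :=
  have h : cs.c j * -cs.c j = 1 := by rw [mul_neg, c_mul_self, neg_neg]
  ⟨⟨_, _, h, by rw [neg_mul, c_mul_self, neg_neg]⟩, rfl⟩

theorem isUnit_γ : IsUnit cs.γ :=
  ⟨⟨_, _, cs.γ_sq, cs.γ_sq⟩, rfl⟩

theorem sum_I_smul_mul_c_mul_self (x : Fin d → H →L[ℂ] H)
    (hxx : ∀ j l, Commute (x j) (x l)) (hxc : ∀ j l, Commute (x j) (cs.c l)) :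
    (∑ j, Complex.I • (x j * cs.c j)) * (∑ j, Complex.I • (x j * cs.c j)) =
      ∑ j, x j * x j := by
  have hsymm : (∑ j, ∑ l, x j * x l * (cs.c j * cs.c l)) + ∑ j, ∑ l, x j * x l * (cs.c j * cs.c l)
      = (-2 : ℂ) • ∑ j, x j * x j := by
    calc _ = ∑ j, ∑ l, x j * x l * (cs.c j * cs.c l + cs.c l * cs.c j) := by
          nth_rw 2 [Finset.sum_comm]
          simp only [← Finset.sum_add_distrib, mul_add, (hxx _ _).eq]
      _ = (-2 : ℂ) • ∑ j, x j * x j := by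
          simp [cs.c_rel, Finset.smul_sum]
  have hS : ∑ j, ∑ l, x j * x l * (cs.c j * cs.c l) = -∑ j, x j * x j :=
    smul_right_injective _ (two_ne_zero (α := ℂ)) ((two_smul ℂ _).trans (hsymm.trans (by module)))
  rw [Finset.sum_mul_sum, ← neg_eq_iff_eq_neg.mpr hS, ← Finset.sum_neg_distrib]
  refine Finset.sum_congr rfl fun j _ ↦ ?_
  rw [← Finset.sum_neg_distrib]
  refine Finset.sum_congr rfl fun l _ ↦ ?_
  rw [smul_mul_smul_comm, Complex.I_mul_I, neg_one_smul, mul_assoc, ← mul_assoc (cs.c j),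
    ← (hxc l j).eq]
  simp only [mul_assoc]

end

structure CommutingUnitaries (cs : CliffordSystem H d) (U : Fin d → H →L[ℂ] H) : Prop where
  mem_unitary : ∀ j, U j ∈ unitary (H →L[ℂ] H)
  commute : ∀ j l, Commute (U j) (U l)
  commute_c : ∀ j l, Commute (U j) (cs.c l)
  commute_γ : ∀ j, Commute (U j) cs.γ

noncomputable def naiveDirac (cs : CliffordSystem H d) (U : Fin d → H →L[ℂ] H) : H →L[ℂ] H :=
  ∑ j, Complex.I • (xPart (U j) * cs.c j)

variable {cs : CliffordSystem H d} {U : Fin d → H →L[ℂ] H} {m : ℝ}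

theorem wilsonDirac_one_eq :
    wilsonDirac cs U 1 m = cs.naiveDirac U + cs.γ * wilsonMass U m := by
  simp [wilsonDirac, naiveDirac, wilsonMass]

namespace CommutingUnitaries

theorem xPart_commute (hU : cs.CommutingUnitaries U) {K : H →L[ℂ] H}
    (hK : ∀ j, Commute (U j) K) (j : Fin d) : Commute (xPart (U j)) K :=
  (hK j).xPart_left (hU.mem_unitary j)

theorem yPart_commute (hU : cs.CommutingUnitaries U) {K : H →L[ℂ] H}
    (hK : ∀ j, Commute (U j) K) (j : Fin d) : Commute (yPart (U j)) K :=
  (hK j).yPart_left (hU.mem_unitary j)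

theorem commute_xPart (hU : cs.CommutingUnitaries U) (j l : Fin d) :
    Commute (U j) (xPart (U l)) :=
  (hU.xPart_commute (hU.commute · j) l).symm

theorem commute_yPart (hU : cs.CommutingUnitaries U) (j l : Fin d) :
    Commute (U j) (yPart (U l)) :=
  (hU.yPart_commute (hU.commute · j) l).symm

theorem commute_wilsonMass (hU : cs.CommutingUnitaries U) {K : H →L[ℂ] H}
    (hK : ∀ j, Commute (U j) K) : Commute K (wilsonMass U m) :=
  (Commute.sum_right _ _ _ fun j _ ↦
    (hU.yPart_commute hK j).symm.sub_right (.one_right _)).add_right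
      ((Commute.one_right _).smul_right _)

theorem isSelfAdjoint_naiveDirac (hU : cs.CommutingUnitaries U) :
    IsSelfAdjoint (cs.naiveDirac U) := by
  refine isSelfAdjoint_sum _ fun j _ ↦ ?_
  rw [IsSelfAdjoint, star_smul, star_mul, cs.c_skew, (isSelfAdjoint_xPart _).star_eq,
    Complex.star_def, Complex.conj_I, neg_mul, neg_smul, smul_neg, neg_neg,
    (hU.xPart_commute (hU.commute_c · j) j).eq]

theorem γ_mul_naiveDirac (hU : cs.CommutingUnitaries U) :
    cs.γ * cs.naiveDirac U = -(cs.naiveDirac U * cs.γ) := by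
  simp only [naiveDirac, Finset.mul_sum, Finset.sum_mul, ← Finset.sum_neg_distrib, mul_smul_comm,
    smul_mul_assoc, ← smul_neg]
  refine Finset.sum_congr rfl fun j _ ↦ ?_
  rw [← mul_assoc, (hU.xPart_commute hU.commute_γ j).symm.eq, mul_assoc, cs.γ_anticomm,
    mul_neg, mul_assoc]

theorem naiveDirac_commute_wilsonMass (hU : cs.CommutingUnitaries U) :
    Commute (cs.naiveDirac U) (wilsonMass U m) :=
  Commute.sum_left _ _ _ fun j _ ↦ (((hU.commute_wilsonMass (hU.commute_xPart · j)).mul_left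
    (hU.commute_wilsonMass (hU.commute_c · j))).smul_left _)

theorem naiveDirac_mul_self (hU : cs.CommutingUnitaries U) :
    cs.naiveDirac U * cs.naiveDirac U = ∑ j, xPart (U j) * xPart (U j) :=
  cs.sum_I_smul_mul_c_mul_self _ (fun j l ↦ hU.xPart_commute (hU.commute_xPart · l) j)
    fun j l ↦ hU.xPart_commute (hU.commute_c · l) j

theorem isSelfAdjoint_wilsonDirac (hU : cs.CommutingUnitaries U) :
    IsSelfAdjoint (wilsonDirac cs U 1 m) := by
  rw [wilsonDirac_one_eq]
  exact hU.isSelfAdjoint_naiveDirac.add ((IsSelfAdjoint.commute_iff cs.γ_sa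
    (isSelfAdjoint_wilsonMass U m)).mp (hU.commute_wilsonMass hU.commute_γ))

theorem wilsonDirac_mul_self (hU : cs.CommutingUnitaries U) :
    wilsonDirac cs U 1 m * wilsonDirac cs U 1 m =
      ∑ j, xPart (U j) * xPart (U j) + wilsonMass U m * wilsonMass U m := by
  rw [wilsonDirac_one_eq, add_mul_mul_self_eq_of_anticommute cs.γ_sq hU.γ_mul_naiveDirac
    (hU.commute_wilsonMass hU.commute_γ) hU.naiveDirac_commute_wilsonMass, hU.naiveDirac_mul_self]

theorem commute_wilsonDirac (hU : cs.CommutingUnitaries U) {K : H →L[ℂ] H}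
    (hK : ∀ j, Commute (U j) K) (hKc : ∀ l, Commute K (cs.c l)) (hKγ : Commute K cs.γ) :
    Commute K (wilsonDirac cs U 1 m) := by
  rw [wilsonDirac_one_eq]
  exact (Commute.sum_right _ _ _ fun l _ ↦
    ((hU.xPart_commute hK l).symm.mul_right (hKc l)).smul_right _).add_right
      (hKγ.mul_right (hU.commute_wilsonMass hK))

theorem wilsonDirac_apply_eq_zero (hU : cs.CommutingUnitaries U) {v : H}
    (hv : wilsonDirac cs U 1 m v = 0) :
    (∀ j, xPart (U j) v = 0) ∧ wilsonMass U m v = 0 := by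
  set S : Option (Fin d) → H →L[ℂ] H := fun o ↦ o.elim (wilsonMass U m) fun j ↦ xPart (U j)
  have hS : ∀ o, IsSelfAdjoint (S o) := by
    rintro (_ | j)
    exacts [isSelfAdjoint_wilsonMass U m, isSelfAdjoint_xPart _]
  have hsum : (∑ o, S o * S o) v = 0 := by
    rw [Fintype.sum_option, add_comm]
    simp only [S, Option.elim]
    rw [← hU.wilsonDirac_mul_self, mul_apply_eq_comp, hv, map_zero]
  exact ⟨fun j ↦ ContinuousLinearMap.apply_eq_zero_of_sum_mul_self_apply_eq_zero hS hsum (some j),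
    ContinuousLinearMap.apply_eq_zero_of_sum_mul_self_apply_eq_zero hS hsum none⟩

theorem commute_wilsonDirac_mul_self (hU : cs.CommutingUnitaries U) {K : H →L[ℂ] H}
    (hK : ∀ j, Commute (U j) K) : Commute K (wilsonDirac cs U 1 m * wilsonDirac cs U 1 m) := by
  rw [hU.wilsonDirac_mul_self]
  have hx := fun j ↦ (hU.xPart_commute hK j).symm
  exact (Commute.sum_right _ _ _ fun j _ ↦ (hx j).mul_right (hx j)).add_right
    ((hU.commute_wilsonMass hK).mul_right (hU.commute_wilsonMass hK))

theorem ker_wilsonDirac [FiniteDimensional ℂ H] (hU : cs.CommutingUnitaries U) (hm0 : 0 < m)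
    (hm2 : m < 2) :
    LinearMap.ker (wilsonDirac cs U 1 m : H →ₗ[ℂ] H) = ⊥ := by
  by_contra hker
  have hyker : ∀ j, ∀ v ∈ LinearMap.ker (wilsonDirac cs U 1 m : H →ₗ[ℂ] H),
      yPart (U j) v ∈ LinearMap.ker (wilsonDirac cs U 1 m : H →ₗ[ℂ] H) := fun j v hv ↦ by
    rw [LinearMap.mem_ker, ContinuousLinearMap.coe_coe] at hv ⊢
    rw [← mul_apply_eq_comp, ← (hU.commute_wilsonDirac (hU.commute_yPart · j)
      (fun l ↦ hU.yPart_commute (hU.commute_c · l) j) (hU.yPart_commute hU.commute_γ j)).eq,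
      mul_apply_eq_comp, hv, map_zero]
  obtain ⟨w, hw, hw0, μ, hμ⟩ := LinearMap.IsSymmetric.exists_mem_ne_zero_forall_apply_eq_smul
    (T := fun j ↦ (yPart (U j) : H →ₗ[ℂ] H)) (fun j ↦ (isSelfAdjoint_yPart _).isSymmetric)
    (fun j l _ ↦ (hU.yPart_commute (hU.commute_yPart · l) j).map
      ContinuousLinearMap.toLinearMapRingHom) hker hyker
  obtain ⟨hxw, hBw⟩ := hU.wilsonDirac_apply_eq_zero hw
  exact wilsonMass_apply_ne_zero hU.mem_unitary hm0 hm2 hw0 hxw hμ hBw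

theorem trace_wilsonDirac_mul_aeval_eq_zero [NeZero d] (hU : cs.CommutingUnitaries U)
    (p : ℂ[X]) :
    LinearMap.trace ℂ H ((wilsonDirac cs U 1 m : H →ₗ[ℂ] H) *
      aeval ((wilsonDirac cs U 1 m : H →ₗ[ℂ] H) * wilsonDirac cs U 1 m) p) = 0 := by
  set N := aeval ((wilsonDirac cs U 1 m : H →ₗ[ℂ] H) * wilsonDirac cs U 1 m) p
  have hN : ∀ K : H →L[ℂ] H, (∀ j, Commute (U j) K) → Commute (K : H →ₗ[ℂ] H) N := fun K hK ↦
    Algebra.commute_of_mem_adjoin_singleton_of_commute (aeval_mem_adjoin_singleton ℂ _)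
      ((hU.commute_wilsonDirac_mul_self (m := m) hK).map ContinuousLinearMap.toLinearMapRingHom)
  have hanti : ∀ a b : H →L[ℂ] H, a * b = -(b * a) →
      (a : H →ₗ[ℂ] H) * b = -((b : H →ₗ[ℂ] H) * a) := fun a b h ↦ by
    rw [← ContinuousLinearMap.toLinearMap_mul, h, ContinuousLinearMap.toLinearMap_neg,
      ContinuousLinearMap.toLinearMap_mul]
  have hcγB : cs.c 0 * (cs.γ * wilsonMass U m) = -(cs.γ * wilsonMass U m * cs.c 0) := by
    rw [← mul_assoc, ← neg_eq_iff_eq_neg.mpr (cs.γ_anticomm 0), neg_mul, mul_assoc,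
      (hU.commute_wilsonMass (hU.commute_c · 0)).eq, mul_assoc]
  rw [wilsonDirac_one_eq, ContinuousLinearMap.toLinearMap_add, add_mul, map_add,
    LinearMap.trace_mul_eq_zero_of_anticommute
      (ContinuousLinearMap.isUnit_iff_isUnit_toLinearMap.mp cs.isUnit_γ)
      (hanti _ _ hU.γ_mul_naiveDirac) (hN _ hU.commute_γ),
    LinearMap.trace_mul_eq_zero_of_anticommute
      (ContinuousLinearMap.isUnit_iff_isUnit_toLinearMap.mp (cs.isUnit_c 0))
      (hanti _ _ hcγB) (hN _ (hU.commute_c · 0)), add_zero]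

end CommutingUnitaries

end CliffordSystem

/-- for exactly commuting unitaries, `D(1,m)` is invertible and
`𝐈(D(1,m)) = 0`. -/
theorem statement8 (d : ℕ) (hd : 1 ≤ d) (m : ℝ) (hm0 : 0 < m) (hm2 : m < 2)
    {H : Type*} [NormedAddCommGroup H] [InnerProductSpace ℂ H] [FiniteDimensional ℂ H]
    (cs : CliffordSystem H d) (U : Fin d → H →L[ℂ] H)
    (hU : ∀ j, U j ∈ unitary (H →L[ℂ] H))
    (hUU : ∀ j l, Commute (U j) (U l))
    (hUc : ∀ j l, Commute (U j) (cs.c l)) (hUγ : ∀ j, Commute (U j) cs.γ) :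
    IsUnit (wilsonDirac cs U 1 m) ∧ Ind (wilsonDirac cs U 1 m) = 0 := by
  have hcomm : cs.CommutingUnitaries U := ⟨hU, hUU, hUc, hUγ⟩
  have : NeZero d := ⟨by omega⟩
  refine ⟨?_, Ind_eq_zero_of_trace_mul_aeval_eq_zero hcomm.isSelfAdjoint_wilsonDirac
    hcomm.trace_wilsonDirac_mul_aeval_eq_zero⟩
  rw [ContinuousLinearMap.isUnit_iff_isUnit_toLinearMap, LinearMap.isUnit_iff_ker_eq_bot]
  exact hcomm.ker_wilsonDirac hm0 hm2
end
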